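/- arXiv:1301.1124 — 3 statements merged into one kernel-verified Lean document; each statement's English description precedes it below -/
import Mathlib

section
/- (Cyclic vector theorem, existence) Let (F, d) be a differential field of characteristic zero whose field of constants is strictly smaller than F (i.e. d ≠ 0), and let (M, ∇) be a differential module over F of rank r ≥ 1. Then there exists c ∈ M such that c, ∇(c), …, ∇^{r−1}(c) form an F-basis of M. -/
open Finset
section Helpers

variable {F : Type} [Field F]

lemma d_zero (d : F → F) (hd_add : ∀ a b : F, d (a + b) = d a + d b) : d 0 = 0 := by
  have := hd_add 0 0; simpa using this.symm

lemma d_one (d : F → F) (hd_mul : ∀ a b : F, d (a * b) = d a * b + a * d b) : d 1 = 0 := by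
  have := hd_mul 1 1; simpa using this

lemma d_nat (d : F → F) (hd_add : ∀ a b : F, d (a + b) = d a + d b)
    (hd_mul : ∀ a b : F, d (a * b) = d a * b + a * d b) (n : ℕ) : d (n : F) = 0 := by
  induction n with
  | zero => simpa using d_zero d hd_add
  | succ n ih =>
    have : ((n + 1 : ℕ) : F) = (n : F) + 1 := by push_cast; ring
    rw [this, hd_add, ih, d_one d hd_mul, add_zero]

variable {M : Type} [AddCommGroup M] [Module F M]

lemma iter_add (nabla : M → M) (hnabla_add : ∀ x y : M, nabla (x + y) = nabla x + nabla y)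
    (m : ℕ) (x y : M) : nabla^[m] (x + y) = nabla^[m] x + nabla^[m] y := by
  induction m generalizing x y with
  | zero => simp
  | succ m ih => rw [Function.iterate_succ_apply, hnabla_add, ih]; rfl

/-- Iterated Leibniz rule. -/
lemma iter_leibniz (d : F → F) (nabla : M → M)
    (hnabla_add : ∀ x y : M, nabla (x + y) = nabla x + nabla y)
    (hLeibniz : ∀ (f : F) (m : M), nabla (f • m) = d f • m + f • nabla m)
    (m : ℕ) (f : F) (u : M) :
    nabla^[m] (f • u) = ∑ i ∈ range (m + 1), (m.choose i) • (d^[i] f • nabla^[m - i] u) := by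
  induction m generalizing f u with
  | zero => simp
  | succ m ih =>
    have hA : ∀ i, d^[i] f • nabla^[m + 1 - i] u = d^[i] f • nabla^[m + 1 - i] u := fun _ => rfl
    have key : nabla^[m + 1] (f • u)
        = ∑ i ∈ range (m + 1), (m.choose i) • (d^[i + 1] f • nabla^[m + 1 - (i + 1)] u)
          + ∑ i ∈ range (m + 1), (m.choose i) • (d^[i] f • nabla^[m + 1 - i] u) := by
      rw [Function.iterate_succ_apply, hLeibniz,
        iter_add nabla hnabla_add, ih (d f) u, ih f (nabla u)]
      congr 1
      · refine Finset.sum_congr rfl fun i hi => ?_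
        rw [Function.iterate_succ_apply]
        simp
      · refine Finset.sum_congr rfl fun i hi => ?_
        have hi' : i ≤ m := Nat.lt_succ_iff.mp (Finset.mem_range.mp hi)
        have : nabla^[m - i] (nabla u) = nabla^[m + 1 - i] u := by
          rw [← Function.iterate_succ_apply]
          congr 1
          omega
        rw [this]
    rw [key]
    symm
    calc ∑ i ∈ range (m + 1 + 1), ((m+1).choose i) • (d^[i] f • nabla^[m + 1 - i] u)
        = ∑ i ∈ range (m + 1), ((m+1).choose (i+1)) • (d^[i+1] f • nabla^[m + 1 - (i+1)] u)
            + ((m+1).choose 0) • (d^[0] f • nabla^[m + 1 - 0] u) :=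
          Finset.sum_range_succ' _ _
      _ = ∑ i ∈ range (m + 1), ((m.choose i) • (d^[i+1] f • nabla^[m + 1 - (i+1)] u)
            + (m.choose (i+1)) • (d^[i+1] f • nabla^[m + 1 - (i+1)] u))
            + (m.choose 0) • (d^[0] f • nabla^[m + 1 - 0] u) := by
          simp only [Nat.choose_succ_succ, add_nsmul, Nat.choose_zero_right]
      _ = ∑ i ∈ range (m + 1), (m.choose i) • (d^[i+1] f • nabla^[m + 1 - (i+1)] u)
            + (∑ i ∈ range (m + 1), (m.choose (i+1)) • (d^[i+1] f • nabla^[m + 1 - (i+1)] u)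
            + (m.choose 0) • (d^[0] f • nabla^[m + 1 - 0] u)) := by
          rw [Finset.sum_add_distrib, add_assoc]
      _ = ∑ i ∈ range (m + 1), (m.choose i) • (d^[i+1] f • nabla^[m + 1 - (i+1)] u)
            + ∑ i ∈ range (m + 1 + 1), (m.choose i) • (d^[i] f • nabla^[m + 1 - i] u) := by
          rw [← Finset.sum_range_succ' (fun i => (m.choose i) • (d^[i] f • nabla^[m + 1 - i] u))]
      _ = ∑ i ∈ range (m + 1), (m.choose i) • (d^[i+1] f • nabla^[m + 1 - (i+1)] u)
            + ∑ i ∈ range (m + 1), (m.choose i) • (d^[i] f • nabla^[m + 1 - i] u) := by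
          congr 1
          rw [Finset.sum_range_succ, Nat.choose_succ_self, zero_smul, add_zero]

end Helpers

section OpIndep

variable {F : Type} [Field F] [CharZero F]

lemma opIndep (d : F → F)
    (hd_add : ∀ a b : F, d (a + b) = d a + d b)
    (hd_mul : ∀ a b : F, d (a * b) = d a * b + a * d b)
    (hd_ne : d ≠ 0) (k : ℕ) :
    ∀ (a : ℕ → F), (∀ f : F, ∑ j ∈ range (k + 1), a j * d^[j] f = 0) → a k = 0 := by
  induction k with
  | zero =>
    intro a h
    simpa using h 1
  | succ k ih =>
    intro a h
    obtain ⟨t, ht⟩ : ∃ t, d t ≠ 0 := Function.ne_iff.mp hd_ne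
    have dlieb : ∀ (m : ℕ) (f g : F), d^[m] (f * g)
        = ∑ i ∈ range (m + 1), (m.choose i : F) * (d^[i] f * d^[m - i] g) := by
      intro m f g
      have := iter_leibniz d d (fun x y => hd_add x y)
        (fun f m => by simpa [smul_eq_mul] using hd_mul f m) m f g
      simpa [smul_eq_mul, nsmul_eq_mul, mul_assoc] using this
    set b : ℕ → F := fun l =>
      ∑ m ∈ Ico 1 (k + 2 - l), a (m + l) * ((m + l).choose m : F) * d^[m] t with hb
    have hrel : ∀ f : F, ∑ l ∈ range (k + 1), b l * d^[l] f = 0 := by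
      intro f
      set G : ℕ → ℕ → F := fun j m => a j * ((j.choose m : F) * (d^[m] t * d^[j - m] f)) with hG
      have h1 : ∑ j ∈ range (k + 2), a j * d^[j] (t * f) = 0 := h (t * f)
      have h2 : ∑ j ∈ range (k + 2), a j * (t * d^[j] f) = 0 := by
        have h0 := h f
        calc ∑ j ∈ range (k + 2), a j * (t * d^[j] f)
            = t * ∑ j ∈ range (k + 2), a j * d^[j] f := by
              rw [Finset.mul_sum]; exact Finset.sum_congr rfl (fun j _ => by ring)
          _ = 0 := by rw [h0, mul_zero]
      have expand : ∀ j, a j * d^[j] (t * f)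
          = a j * (t * d^[j] f) + ∑ m ∈ Ico 1 (j + 1), G j m := by
        intro j
        rw [dlieb j t f, Finset.range_eq_Ico, Finset.sum_eq_sum_Ico_succ_bot (Nat.succ_pos j)]
        simp only [Nat.choose_zero_right, Nat.cast_one, Function.iterate_zero, id_eq, one_mul,
          Nat.sub_zero]
        rw [mul_add, Finset.mul_sum]
      have h3 : ∑ j ∈ range (k + 2), ∑ m ∈ Ico 1 (j + 1), G j m = 0 := by
        have e : ∑ j ∈ range (k + 2), a j * d^[j] (t * f)
            = ∑ j ∈ range (k + 2), a j * (t * d^[j] f)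
              + ∑ j ∈ range (k + 2), ∑ m ∈ Ico 1 (j + 1), G j m := by
          rw [← Finset.sum_add_distrib]; exact Finset.sum_congr rfl fun j _ => expand j
        rw [h1, h2, zero_add] at e
        exact e.symm
      have h4 : ∑ j ∈ range (k + 2), ∑ m ∈ Ico 1 (j + 1), G j m
          = ∑ m ∈ Ico 1 (k + 2), ∑ j ∈ Ico m (k + 2), G j m :=
        Finset.sum_comm' (by intro x y; simp only [Finset.mem_range, Finset.mem_Ico]; omega)
      have h5 : ∀ m ∈ Ico 1 (k + 2), ∑ j ∈ Ico m (k + 2), G j m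
          = ∑ l ∈ range (k + 2 - m), G (m + l) m := fun m _ => Finset.sum_Ico_eq_sum_range _ _ _
      have h6 : ∑ m ∈ Ico 1 (k + 2), ∑ l ∈ range (k + 2 - m), G (m + l) m
          = ∑ l ∈ range (k + 1), ∑ m ∈ Ico 1 (k + 2 - l), G (m + l) m :=
        Finset.sum_comm' (by intro x y; simp only [Finset.mem_range, Finset.mem_Ico]; omega)
      have h7 : ∀ l ∈ range (k + 1), (∑ m ∈ Ico 1 (k + 2 - l), G (m + l) m) = b l * d^[l] f := by
        intro l _
        rw [hb, Finset.sum_mul]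
        refine Finset.sum_congr rfl fun m _ => ?_
        have hml : m + l - m = l := by omega
        show a (m + l) * (((m + l).choose m : ℕ) * (d^[m] t * d^[m + l - m] f))
            = a (m + l) * ((m + l).choose m : ℕ) * d^[m] t * d^[l] f
        rw [hml]; ring
      have : ∑ l ∈ range (k + 1), b l * d^[l] f = 0 := by
        calc ∑ l ∈ range (k + 1), b l * d^[l] f
            = ∑ l ∈ range (k + 1), ∑ m ∈ Ico 1 (k + 2 - l), G (m + l) m :=
              (Finset.sum_congr rfl h7).symm
          _ = ∑ m ∈ Ico 1 (k + 2), ∑ l ∈ range (k + 2 - m), G (m + l) m := h6.symm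
          _ = ∑ m ∈ Ico 1 (k + 2), ∑ j ∈ Ico m (k + 2), G j m := (Finset.sum_congr rfl h5).symm
          _ = ∑ j ∈ range (k + 2), ∑ m ∈ Ico 1 (j + 1), G j m := h4.symm
          _ = 0 := h3
      exact this
    have hbk : b k = 0 := ih b hrel
    have hbk' : a (1 + k) * ((1 + k : ℕ) : F) * d t = 0 := by
      have : b k = a (1 + k) * (((1 + k).choose 1 : ℕ) : F) * d t := by
        have h2k : k + 2 - k = 2 := by omega
        show (∑ m ∈ Ico 1 (k + 2 - k), a (m + k) * (((m + k).choose m : ℕ) : F) * d^[m] t) = _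
        rw [h2k]
        have hi : Ico 1 2 = {1} := rfl
        rw [hi, Finset.sum_singleton, Function.iterate_one]
      rw [this, Nat.choose_one_right] at hbk
      exact hbk
    have hcast : ((1 + k : ℕ) : F) ≠ 0 := Nat.cast_ne_zero.mpr (by omega)
    have : a (1 + k) = 0 := by
      rcases mul_eq_zero.mp hbk' with h' | h'
      · rcases mul_eq_zero.mp h' with h'' | h''
        · exact h''
        · exact absurd h'' hcast
      · exact absurd h' ht
    simpa [Nat.add_comm] using this

end OpIndep

/-- cyclic vector theorem: over a differential field of characteristic
zero with nonzero derivation, every differential module of rank `r ≥ 1` admits a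
cyclic vector `c`, i.e. `c, ∇c, …, ∇^{r-1}c` form a basis. -/
theorem cyclic_vector_exists
    {F : Type} [Field F] [CharZero F] (d : F → F)
    (hd_add : ∀ a b : F, d (a + b) = d a + d b)
    (hd_mul : ∀ a b : F, d (a * b) = d a * b + a * d b)
    (hd_ne : d ≠ 0)
    {M : Type} [AddCommGroup M] [Module F M] [FiniteDimensional F M]
    (nabla : M → M)
    (hnabla_add : ∀ x y : M, nabla (x + y) = nabla x + nabla y)
    (hLeibniz : ∀ (f : F) (m : M), nabla (f • m) = d f • m + f • nabla m)
    (r : ℕ) (hr : 1 ≤ r) (hrank : Module.finrank F M = r) :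
    ∃ c : M, LinearIndependent F (fun i : Fin r => nabla^[(i : ℕ)] c) ∧
      Submodule.span F (Set.range fun i : Fin r => nabla^[(i : ℕ)] c) = ⊤ := by
  classical
  set P : ℕ → Prop := fun k => ∃ c : M, LinearIndependent F (fun i : Fin k => nabla^[(i : ℕ)] c)
    with hP
  set k : ℕ := Nat.findGreatest P r with hkdef
  have hkr : k ≤ r := Nat.findGreatest_le r
  have hPk : P k := by
    rcases Nat.eq_zero_or_pos k with h0 | hpos
    · rw [h0]
      exact ⟨0, linearIndependent_empty_type⟩
    · exact Nat.findGreatest_of_ne_zero hkdef.symm (Nat.pos_iff_ne_zero.mp hpos)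
  obtain ⟨c, hc⟩ := hPk
  by_cases hkeq : k = r
  · rw [hkeq] at hc
    have hne : Nonempty (Fin r) := ⟨⟨0, hr⟩⟩
    have hcard : Fintype.card (Fin r) = Module.finrank F M := by
      simpa using hrank.symm
    exact ⟨c, hc, hc.span_eq_top_of_card_eq_finrank hcard⟩
  have hklt : k < r := lt_of_le_of_ne hkr hkeq
  exfalso
  -- every (k+1)-iterate family is linearly dependent
  have hdep : ∀ x : M, ¬ LinearIndependent F (fun i : Fin (k + 1) => nabla^[(i : ℕ)] x) := by
    intro x hx
    have hPk1 : P (k + 1) := ⟨x, hx⟩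
    have hgr : Nat.findGreatest P r < k + 1 := by rw [← hkdef]; omega
    exact Nat.findGreatest_is_greatest hgr (by omega) hPk1
  -- pick u₀ outside the span of the k iterates of c
  have hWne : Submodule.span F (Set.range fun i : Fin k => nabla^[(i : ℕ)] c) ≠ ⊤ := by
    intro htop
    have h1 : Module.finrank F
        (Submodule.span F (Set.range fun i : Fin k => nabla^[(i : ℕ)] c)) ≤ k := by
      simpa [Set.finrank] using finrank_range_le_card (fun i : Fin k => nabla^[(i : ℕ)] c)
    rw [htop] at h1
    have h2 : Module.finrank F (⊤ : Submodule F M) = r := by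
      rw [finrank_top]; exact hrank
    omega
  obtain ⟨u₀, hu₀⟩ : ∃ u₀ : M,
      u₀ ∉ Submodule.span F (Set.range fun i : Fin k => nabla^[(i : ℕ)] c) := by
    by_contra hcon
    push_neg at hcon
    exact hWne (Submodule.eq_top_iff'.mpr hcon)
  -- the independent family of size k+1
  set fam : Fin (k + 1) → M := Fin.snoc (fun i : Fin k => nabla^[(i : ℕ)] c) u₀ with hfamdef
  have hfam : LinearIndependent F fam := linearIndependent_fin_snoc.mpr ⟨hc, hu₀⟩
  set W : Submodule F M := Submodule.span F (Set.range fam) with hWdef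
  set hBW : Module.Basis (Fin (k + 1)) F W := Module.Basis.span hfam with hBWdef
  obtain ⟨Wc, hWc⟩ := Submodule.exists_isCompl W
  set T : M →ₗ[F] (Fin (k + 1) → F) :=
    (hBW.equivFun : W ≃ₗ[F] (Fin (k + 1) → F)).toLinearMap.comp
      (W.linearProjOfIsCompl Wc hWc) with hTdef
  have hT : ∀ j j' : Fin (k + 1), T (fam j) j' = if j = j' then 1 else 0 := by
    intro j j'
    have hmem : fam j ∈ W := Submodule.subset_span (Set.mem_range_self j)
    have h1 : (W.linearProjOfIsCompl Wc hWc) (fam j) = hBW j := by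
      have he : fam j = ((hBW j : W) : M) := by
        rw [hBWdef]; exact (congrArg Subtype.val (Module.Basis.span_apply hfam j)).symm
      rw [he]
      exact Submodule.linearProjOfIsCompl_apply_left hWc (hBW j)
    have : T (fam j) = hBW.equivFun (hBW j) := by
      rw [hTdef]
      simp only [LinearMap.comp_apply, h1, LinearEquiv.coe_toLinearMap]
    rw [this]
    exact hBW.equivFun_self j j'
  -- the determinant function
  set Dml : MultilinearMap F (fun _ : Fin (k + 1) => (Fin (k + 1) → F)) F :=
    (Matrix.detRowAlternating : (Fin (k + 1) → F) [⋀^Fin (k + 1)]→ₗ[F] F).toMultilinearMap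
    with hDdef
  have hDmat : ∀ v : Fin (k + 1) → (Fin (k + 1) → F), Dml v = (Matrix.of v).det := fun _ => rfl
  have hdet0 : ∀ x : M, Dml (fun i : Fin (k + 1) => T (nabla^[(i : ℕ)] x)) = 0 := by
    intro x
    obtain ⟨g, hg, i, hgi⟩ := Fintype.not_linearIndependent_iff.mp (hdep x)
    rw [hDmat]
    rw [← Matrix.exists_vecMul_eq_zero_iff]
    refine ⟨g, fun h => hgi (congrFun h i), ?_⟩
    funext j
    have : ∑ i' : Fin (k + 1), g i' * T (nabla^[(i' : ℕ)] x) j = 0 := by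
      have hTsum : (T (∑ i' : Fin (k + 1), g i' • nabla^[(i' : ℕ)] x)) j
          = ∑ i' : Fin (k + 1), g i' * T (nabla^[(i' : ℕ)] x) j := by
        rw [map_sum]
        rw [Finset.sum_apply]
        refine Finset.sum_congr rfl fun i' _ => ?_
        rw [map_smul]
        rfl
      rw [← hTsum, hg, map_zero]
      rfl
    simpa [Matrix.vecMul, dotProduct] using this
  -- nabla commutes with natural-number scalars
  have hsm : ∀ (nt : ℕ) (u : M), nabla ((nt : F) • u) = (nt : F) • nabla u := by
    intro nt u
    rw [hLeibniz, d_nat d hd_add hd_mul, zero_smul, zero_add]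
  have hns : ∀ (m : ℕ) (x u : M) (nt : ℕ),
      nabla^[m] (x + (nt : F) • u) = nabla^[m] x + (nt : F) • nabla^[m] u := by
    intro m
    induction m with
    | zero => intro x u nt; simp
    | succ m ih =>
      intro x u nt
      rw [Function.iterate_succ_apply, hnabla_add, hsm, ih,
        ← Function.iterate_succ_apply, ← Function.iterate_succ_apply]
  -- first multilinear expansion : the Ψ identity
  have hΨ : ∀ u : M,
      ∑ i : Fin (k + 1),
        Dml (Function.update (fun i' : Fin (k + 1) => T (nabla^[(i' : ℕ)] c)) i
          (T (nabla^[(i : ℕ)] u))) = 0 := by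
    intro u
    set rc : Fin (k + 1) → (Fin (k + 1) → F) := fun i => T (nabla^[(i : ℕ)] c) with hrc
    set ru : Fin (k + 1) → (Fin (k + 1) → F) := fun i => T (nabla^[(i : ℕ)] u) with hru
    -- evaluation of the polynomial at natural numbers
    have hval : ∀ nt : ℕ,
        ∑ s : Finset (Fin (k + 1)), ((nt : F)) ^ s.card * Dml (s.piecewise ru rc) = 0 := by
      intro nt
      have hx : (fun i : Fin (k + 1) => T (nabla^[(i : ℕ)] (c + (nt : F) • u)))
          = ((nt : F) • ru) + rc := by
        funext i
        rw [hns (i : ℕ) c u nt, map_add, map_smul]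
        show T (nabla^[(i : ℕ)] c) + (nt : F) • T (nabla^[(i : ℕ)] u)
          = (nt : F) • T (nabla^[(i : ℕ)] u) + T (nabla^[(i : ℕ)] c)
        exact add_comm _ _
      have h0 : Dml (((nt : F) • ru) + rc) = 0 := by rw [← hx]; exact hdet0 _
      rw [Dml.map_add_univ ((nt : F) • ru) rc] at h0
      rw [← h0]
      refine (Finset.sum_congr rfl fun s _ => ?_).symm
      have hpw : s.piecewise ((nt : F) • ru) rc
          = s.piecewise (fun i => (if i ∈ s then (nt : F) else 1) • (s.piecewise ru rc i))
              (s.piecewise ru rc) := by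
        funext i
        by_cases hi : i ∈ s <;> simp [Finset.piecewise, hi]
      rw [hpw, Dml.map_piecewise_smul]
      have hprod : (∏ i ∈ s, (if i ∈ s then (nt : F) else 1)) = (nt : F) ^ s.card := by
        rw [Finset.prod_congr rfl (fun i hi => if_pos hi), Finset.prod_const]
      rw [hprod, smul_eq_mul]
    -- build the polynomial and conclude that its coefficients vanish
    set q : Polynomial F := ∑ s : Finset (Fin (k + 1)),
      Polynomial.C (Dml (s.piecewise ru rc)) * Polynomial.X ^ s.card with hq
    have hqeval : ∀ nt : ℕ, q.eval ((nt : ℕ) : F) = 0 := by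
      intro nt
      rw [hq, Polynomial.eval_finset_sum]
      rw [← hval nt]
      refine Finset.sum_congr rfl fun s _ => ?_
      rw [Polynomial.eval_mul, Polynomial.eval_C, Polynomial.eval_pow, Polynomial.eval_X,
        mul_comm]
    have hq0 : q = 0 := by
      refine Polynomial.eq_zero_of_infinite_isRoot q ?_
      refine Set.Infinite.mono ?_ (Set.infinite_range_of_injective (Nat.cast_injective (R := F)))
      rintro x ⟨nt, rfl⟩
      exact hqeval nt
    have hcoeff : q.coeff 1 = ∑ s : Finset (Fin (k + 1)),
        (if 1 = s.card then Dml (s.piecewise ru rc) else 0) := by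
      rw [hq, Polynomial.finset_sum_coeff]
      refine Finset.sum_congr rfl fun s _ => ?_
      rw [Polynomial.coeff_C_mul, Polynomial.coeff_X_pow]
      by_cases h1 : 1 = s.card <;> simp [h1]
    have hc1 : ∑ s : Finset (Fin (k + 1)),
        (if 1 = s.card then Dml (s.piecewise ru rc) else 0) = 0 := by
      rw [← hcoeff, hq0, Polynomial.coeff_zero]
    -- identify the singleton part
    have hfilt : Finset.univ.filter (fun s : Finset (Fin (k + 1)) => 1 = s.card)
        = Finset.univ.powersetCard 1 := by
      rw [Finset.powersetCard_eq_filter, Finset.powerset_univ]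
      exact Finset.filter_congr fun s _ => by constructor <;> (intro h; omega)
    calc ∑ i : Fin (k + 1), Dml (Function.update rc i (T (nabla^[(i : ℕ)] u)))
        = ∑ s ∈ Finset.univ.filter (fun s : Finset (Fin (k + 1)) => 1 = s.card),
            Dml (s.piecewise ru rc) := by
          rw [hfilt, Finset.powersetCard_one, Finset.sum_map]
          refine (Finset.sum_congr rfl fun i _ => ?_).symm
          show Dml (Finset.piecewise {i} ru rc) = _
          rw [Finset.piecewise_singleton]
      _ = ∑ s : Finset (Fin (k + 1)),
            (if 1 = s.card then Dml (s.piecewise ru rc) else 0) := Finset.sum_filter _ _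
      _ = 0 := hc1
  -- now plug u = f • u₀ and extract coefficients of the iterated derivatives
  set rc : Fin (k + 1) → (Fin (k + 1) → F) := fun i => T (nabla^[(i : ℕ)] c) with hrc
  set E : Fin (k + 1) → ℕ → F :=
    fun i mi => Dml (Function.update rc i (T (nabla^[mi] u₀))) with hE
  set a : ℕ → F := fun j => ∑ i ∈ Finset.univ.filter (fun i : Fin (k + 1) => j ≤ (i : ℕ)),
      (((i : ℕ).choose j : ℕ) : F) * E i ((i : ℕ) - j) with ha
  have hrel : ∀ f : F, ∑ j ∈ range (k + 1), a j * d^[j] f = 0 := by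
    intro f
    have h1 := hΨ (f • u₀)
    have hTi : ∀ i : Fin (k + 1), Dml (Function.update rc i (T (nabla^[(i : ℕ)] (f • u₀))))
        = ∑ j ∈ range ((i : ℕ) + 1),
            (((i : ℕ).choose j : ℕ) : F) * (d^[j] f * E i ((i : ℕ) - j)) := by
      intro i
      have hl := iter_leibniz d nabla hnabla_add hLeibniz (i : ℕ) f u₀
      have hTexp : T (nabla^[(i : ℕ)] (f • u₀))
          = ∑ j ∈ range ((i : ℕ) + 1),
              ((i : ℕ).choose j) • (d^[j] f • T (nabla^[(i : ℕ) - j] u₀)) := by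
        rw [hl, map_sum]
        refine Finset.sum_congr rfl fun j _ => ?_
        rw [map_nsmul, map_smul]
      rw [hTexp]
      have hLdef : ∀ x, Dml (Function.update rc i x) = (Dml.toLinearMap rc i) x :=
        fun _ => rfl
      rw [hLdef, map_sum]
      refine Finset.sum_congr rfl fun j _ => ?_
      rw [map_nsmul, map_smul, ← hLdef]
      rw [nsmul_eq_mul, smul_eq_mul]
    rw [Finset.sum_congr rfl (fun i _ => hTi i)] at h1
    have hsw : ∑ i : Fin (k + 1), ∑ j ∈ range ((i : ℕ) + 1),
          (((i : ℕ).choose j : ℕ) : F) * (d^[j] f * E i ((i : ℕ) - j))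
        = ∑ j ∈ range (k + 1), ∑ i ∈ Finset.univ.filter (fun i : Fin (k + 1) => j ≤ (i : ℕ)),
            (((i : ℕ).choose j : ℕ) : F) * (d^[j] f * E i ((i : ℕ) - j)) := by
      refine Finset.sum_comm' ?_
      intro x y
      have hx2 := x.isLt
      simp only [Finset.mem_univ, true_and, Finset.mem_range, Finset.mem_filter]
      omega
    rw [hsw] at h1
    rw [← h1]
    refine Finset.sum_congr rfl fun j _ => ?_
    show (∑ i ∈ Finset.univ.filter (fun i : Fin (k + 1) => j ≤ (i : ℕ)),
        (((i : ℕ).choose j : ℕ) : F) * E i ((i : ℕ) - j)) * d^[j] f = _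
    rw [Finset.sum_mul]
    refine Finset.sum_congr rfl fun i _ => ?_
    ring
  have hak : a k = 0 := opIndep d hd_add hd_mul hd_ne k a hrel
  have hfilt2 : Finset.univ.filter (fun i : Fin (k + 1) => k ≤ (i : ℕ)) = {Fin.last k} := by
    ext i
    have hx2 := i.isLt
    simp only [Finset.mem_filter, Finset.mem_univ, true_and, Finset.mem_singleton, Fin.ext_iff,
      Fin.val_last]
    omega
  have hone : a k = 1 := by
    show (∑ i ∈ Finset.univ.filter (fun i : Fin (k + 1) => k ≤ (i : ℕ)),
        (((i : ℕ).choose k : ℕ) : F) * E i ((i : ℕ) - k)) = 1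
    rw [hfilt2, Finset.sum_singleton]
    have hlast : ((Fin.last k : Fin (k + 1)) : ℕ) = k := Fin.val_last k
    rw [hlast, Nat.choose_self, Nat.sub_self]
    have hupdate : Function.update rc (Fin.last k) (T (nabla^[0] u₀))
        = fun i : Fin (k + 1) => T (fam i) := by
      funext i
      by_cases hi : i = Fin.last k
      · subst hi
        rw [Function.update_self]
        simp only [Function.iterate_zero, id_eq]
        have : fam (Fin.last k) = u₀ := by rw [hfamdef]; exact Fin.snoc_last _ _
        rw [this]
      · rw [Function.update_of_ne hi]
        have hlt : (i : ℕ) < k := by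
          have h3 : (i : ℕ) ≠ k := by
            intro hcon; exact hi (Fin.ext (by rw [hcon, Fin.val_last]))
          omega
        have hfi : fam i = nabla^[(i : ℕ)] c := by
          have hcs : i = Fin.castSucc ⟨(i : ℕ), hlt⟩ := Fin.ext (by simp)
          rw [hcs, hfamdef]
          exact Fin.snoc_castSucc _ _ _
        show T (nabla^[(i : ℕ)] c) = T (fam i)
        rw [hfi]
    have hEval : E (Fin.last k) 0 = 1 := by
      show Dml (Function.update rc (Fin.last k) (T (nabla^[0] u₀))) = 1
      rw [hupdate, hDmat]
      have hid : Matrix.of (fun i : Fin (k + 1) => T (fam i))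
          = (1 : Matrix (Fin (k + 1)) (Fin (k + 1)) F) := by
        ext i j
        show T (fam i) j = _
        rw [hT i j, Matrix.one_apply]
      rw [hid, Matrix.det_one]
    rw [hEval, Nat.cast_one, mul_one]
  rw [hak] at hone
  exact zero_ne_one hone
end

section
/- (Recovery of slopes from the push-forward slopes) Let s₁ ≤ ⋯ ≤ s_r be reals with s_i ≤ ln(ρ) for all i, ω ∈ (0,1), p ≥ 2, and define the multiset S' of pr values as in the Frobenius push-forward slope formula (values ln(|p|ρ^{p−1}) + s_i with multiplicity p for s_i ≤ ln(ωρ); value ln(ω^pρ^p) with multiplicity (p−1)·#{i : s_i > ln(ωρ)}; values p·s_i for ln(ωρ) < s_i). Then the original sequence (s₁, …, s_r) is uniquely determined by the multiset S': if two increasing sequences s and s' produce the same multiset, then s = s'. -/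
open Multiset in
private lemma my_filter_bind {α β : Type*} (m : Multiset α) (f : α → Multiset β)
    (q : β → Prop) [DecidablePred q] :
    (m.bind f).filter q = m.bind fun a => (f a).filter q := by
  induction m using Multiset.induction_on with
  | empty => simp
  | cons a m ih => simp [Multiset.cons_bind, Multiset.filter_add, ih]

open Multiset in
private lemma my_bind_replicate {α : Type*} (w : α) (m : Multiset ℕ) (g : ℕ → ℕ) :
    (m.bind fun i => Multiset.replicate (g i) w) = Multiset.replicate ((m.map g).sum) w := by
  induction m using Multiset.induction_on with
  | empty => simp
  | cons a m ih => simp [Multiset.cons_bind, ih, Multiset.replicate_add]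

open Multiset in
private lemma my_bind_nsmul {α : Type*} (p : ℕ) (m : Multiset ℕ) (G : ℕ → Multiset α) :
    (m.bind fun i => p • G i) = p • m.bind G := by
  induction m using Multiset.induction_on with
  | empty => simp
  | cons a m ih => simp [Multiset.cons_bind, ih, smul_add]

open Multiset in
private lemma my_filter_replicate {α : Type*} (q : α → Prop) [DecidablePred q] (n : ℕ) (a : α) :
    (Multiset.replicate n a).filter q = if q a then Multiset.replicate n a else 0 := by
  split
  · exact Multiset.filter_eq_self.mpr fun b hb => by rwa [Multiset.eq_of_mem_replicate hb]
  · exact Multiset.filter_eq_nil.mpr fun b hb => by rwa [Multiset.eq_of_mem_replicate hb]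

/-- The multiset of slopes of the Frobenius push-forward: a slope `s i ≤ ln(ωρ)` yields
`ln(|p|ρ^{p-1}) + s i` with multiplicity `p` (with `|p| = ω^{p-1}`), and a slope
`s i > ln(ωρ)` yields `p·s i` once together with `ln(ω^p ρ^p)` with multiplicity `p-1`. -/
noncomputable def pushforwardSlopes (p r : ℕ) (ω ρ : ℝ) (s : ℕ → ℝ) : Multiset ℝ :=
  (Finset.Icc 1 r).val.bind fun i =>
    if s i ≤ Real.log (ω * ρ) then
      Multiset.replicate p (Real.log (ω ^ (p - 1) * ρ ^ (p - 1)) + s i)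
    else
      {(p : ℝ) * s i} + Multiset.replicate (p - 1) (Real.log (ω ^ p * ρ ^ p))

/-- an increasing slope sequence bounded above by `ln ρ` is uniquely
determined by the multiset of slopes of its Frobenius push-forward. -/
theorem pushforward_slopes_injective
    (r : ℕ) (hr : 1 ≤ r) (p : ℕ) (hp : 2 ≤ p) (ρ ω : ℝ)
    (hρ : 0 < ρ) (hω0 : 0 < ω) (hω1 : ω < 1)
    (s s' : ℕ → ℝ)
    (hmono : ∀ i : ℕ, 1 ≤ i → i < r → s i ≤ s (i + 1))
    (hmono' : ∀ i : ℕ, 1 ≤ i → i < r → s' i ≤ s' (i + 1))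
    (hbd : ∀ i : ℕ, 1 ≤ i → i ≤ r → s i ≤ Real.log ρ)
    (hbd' : ∀ i : ℕ, 1 ≤ i → i ≤ r → s' i ≤ Real.log ρ)
    (heq : pushforwardSlopes p r ω ρ s = pushforwardSlopes p r ω ρ s') :
    ∀ i : ℕ, 1 ≤ i → i ≤ r → s i = s' i := by
  classical
  set w : ℝ := Real.log (ω * ρ) with hw
  set I : Multiset ℕ := (Finset.Icc 1 r).val with hI
  have hp2 : (2:ℝ) ≤ (p:ℝ) := by exact_mod_cast hp
  have hp0 : (0:ℝ) < (p:ℝ) := by linarith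
  have hpc : ((p-1 : ℕ) : ℝ) = (p:ℝ) - 1 := by
    have : 1 ≤ p := by omega
    push_cast [Nat.cast_sub this]; ring
  have hc : Real.log (ω ^ (p-1) * ρ ^ (p-1)) = ((p:ℝ)-1) * w := by
    rw [← mul_pow, Real.log_pow, hpc]
  have hL : Real.log (ω ^ p * ρ ^ p) = (p:ℝ) * w := by
    rw [← mul_pow, Real.log_pow]
  set h : ℝ → ℝ := fun x => min (x - ((p:ℝ)-1)*w) (x/p) with hh
  have hsmall : ∀ x : ℝ, x ≤ w → h (((p:ℝ)-1)*w + x) = x := by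
    intro x hx
    have h1 : ((p:ℝ)-1)*w + x - ((p:ℝ)-1)*w = x := by ring
    have h2 : x ≤ (((p:ℝ)-1)*w + x)/p := by
      rw [le_div_iff₀ hp0]; nlinarith
    simp only [hh, h1]
    exact min_eq_left h2
  have hlarge : ∀ x : ℝ, w < x → h ((p:ℝ)*x) = x := by
    intro x hx
    have h1 : (p:ℝ)*x/p = x := by field_simp
    have h2 : (p:ℝ)*x/p ≤ (p:ℝ)*x - ((p:ℝ)-1)*w := by rw [h1]; nlinarith
    simp only [hh]
    rw [min_eq_right h2, h1]
  have hfill : h ((p:ℝ)*w) = w := by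
    have h1 : (p:ℝ)*w/p = w := by field_simp
    have h2 : (p:ℝ)*w - ((p:ℝ)-1)*w = w := by ring
    simp [hh, h1, h2]
  -- F t i : image of the i-th block under h
  set F : (ℕ → ℝ) → ℕ → Multiset ℝ := fun t i =>
    if t i ≤ w then Multiset.replicate p (t i) else {t i} + Multiset.replicate (p-1) w
    with hF
  have key : ∀ t : ℕ → ℝ, (pushforwardSlopes p r ω ρ t).map h = I.bind (F t) := by
    intro t
    unfold pushforwardSlopes
    rw [Multiset.map_bind]
    refine congrArg _ (funext fun i => ?_)
    by_cases ht : t i ≤ w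
    · rw [if_pos ht, hF]
      simp only [if_pos ht, Multiset.map_replicate, hc, hsmall _ ht]
    · rw [if_neg ht, hF]
      push_neg at ht
      simp only [if_neg (not_le.mpr ht), Multiset.map_add, Multiset.map_singleton,
        Multiset.map_replicate, hL, hlarge _ ht, hfill]
  have hU : I.bind (F s) = I.bind (F s') := by rw [← key s, ← key s', heq]
  set k : (ℕ → ℝ) → ℕ := fun t => (I.map fun i => if t i ≤ w then 0 else 1).sum with hkdef
  have keyk : ∀ t : ℕ → ℝ,
      ((pushforwardSlopes p r ω ρ t).filter (fun x => (p:ℝ)*w < x)).card = k t := by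
    intro t
    unfold pushforwardSlopes
    rw [my_filter_bind, Multiset.card_bind]
    simp only [hkdef]
    congr 1
    refine Multiset.map_congr rfl fun i _ => ?_
    simp only [Function.comp_apply]
    by_cases ht : t i ≤ w
    · rw [if_pos ht, if_pos ht]
      have hne : ¬ ((p:ℝ)*w < Real.log (ω ^ (p-1) * ρ ^ (p-1)) + t i) := by
        rw [hc]; push_neg; nlinarith
      simp [my_filter_replicate, hne]
    · rw [if_neg ht, if_neg ht]
      push_neg at ht
      have h1 : (p:ℝ)*w < (p:ℝ)*(t i) := by nlinarith
      have h2 : ¬ ((p:ℝ)*w < Real.log (ω ^ p * ρ ^ p)) := by rw [hL]; exact lt_irrefl _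
      simp [Multiset.filter_add, Multiset.filter_singleton, h1, my_filter_replicate, h2,
        lt_self_iff_false]
  have hk : k s = k s' := by rw [← keyk s, ← keyk s', heq]
  have hsplit_le : ∀ t : ℕ → ℝ,
      (I.bind (F t)).filter (fun x => x ≤ w) =
        (I.bind fun i => if t i ≤ w then Multiset.replicate p (t i) else 0)
          + Multiset.replicate ((p-1) * k t) w := by
    intro t
    rw [my_filter_bind]
    have step : (I.bind fun i => ((F t i).filter fun x => x ≤ w)) =
        I.bind fun i => (if t i ≤ w then Multiset.replicate p (t i) else 0)
          + Multiset.replicate (if t i ≤ w then 0 else (p-1)) w := by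
      refine congrArg _ (funext fun i => ?_)
      by_cases ht : t i ≤ w
      · simp [hF, ht, my_filter_replicate]
      · have ht' : w < t i := not_le.mp ht
        simp [hF, ht, Multiset.filter_add, Multiset.filter_singleton,
          not_le.mpr ht', my_filter_replicate]
    rw [step, Multiset.bind_add, my_bind_replicate]
    congr 1
    refine congrArg (fun n => Multiset.replicate n w) ?_
    simp only [hkdef]
    rw [← Multiset.sum_map_mul_left]
    refine congrArg Multiset.sum (Multiset.map_congr rfl fun i _ => ?_)
    by_cases ht : t i ≤ w <;> simp [ht]
  have hsplit_gt : ∀ t : ℕ → ℝ,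
      (I.bind (F t)).filter (fun x => ¬ x ≤ w) =
        I.bind fun i => if t i ≤ w then 0 else {t i} := by
    intro t
    rw [my_filter_bind]
    refine congrArg _ (funext fun i => ?_)
    by_cases ht : t i ≤ w
    · simp [hF, ht, my_filter_replicate]
    · simp [hF, ht, Multiset.filter_add, Multiset.filter_singleton, my_filter_replicate,
        lt_self_iff_false, not_le.mp ht]
  have hAp : (I.bind fun i => if s i ≤ w then Multiset.replicate p (s i) else 0) =
      (I.bind fun i => if s' i ≤ w then Multiset.replicate p (s' i) else 0) := by
    have e1 := hsplit_le s
    rw [hU, hsplit_le s', ← hk] at e1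
    exact add_right_cancel e1.symm
  have hsm : ∀ t : ℕ → ℝ, (I.bind fun i => if t i ≤ w then Multiset.replicate p (t i) else 0)
      = p • (I.bind fun i => if t i ≤ w then ({t i} : Multiset ℝ) else 0) := by
    intro t
    rw [← my_bind_nsmul]
    refine congrArg _ (funext fun i => ?_)
    by_cases ht : t i ≤ w
    · rw [if_pos ht, if_pos ht, ← Multiset.replicate_one (t i), Multiset.nsmul_replicate,
        mul_one]
    · simp [ht]
  have hA : (I.bind fun i => if s i ≤ w then ({s i} : Multiset ℝ) else 0) =
      (I.bind fun i => if s' i ≤ w then ({s' i} : Multiset ℝ) else 0) := by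
    rw [hsm s, hsm s'] at hAp
    ext x
    have := congrArg (Multiset.count x) hAp
    rw [Multiset.count_nsmul, Multiset.count_nsmul] at this
    exact Nat.eq_of_mul_eq_mul_left (by omega) this
  have hB : (I.bind fun i => if s i ≤ w then 0 else ({s i} : Multiset ℝ)) =
      (I.bind fun i => if s' i ≤ w then 0 else ({s' i} : Multiset ℝ)) := by
    have e1 := hsplit_gt s
    rw [hU, hsplit_gt s'] at e1
    exact e1.symm
  have hM : I.map s = I.map s' := by
    have comb : ∀ t : ℕ → ℝ,
        (I.bind fun i => (if t i ≤ w then ({t i} : Multiset ℝ) else 0)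
          + (if t i ≤ w then 0 else ({t i} : Multiset ℝ))) = I.map t := by
      intro t
      rw [← Multiset.bind_singleton I t]
      refine congrArg _ (funext fun i => ?_)
      by_cases ht : t i ≤ w <;> simp [ht]
    rw [← comb s, ← comb s', Multiset.bind_add, Multiset.bind_add, hA, hB]
  -- transfer to sorted lists
  have hIcoe : I = ((List.range' 1 r : List ℕ) : Multiset ℕ) := by
    rw [hI, Nat.Icc_eq_range']
    simp
  have hlistperm : ((List.range' 1 r).map s).Perm ((List.range' 1 r).map s') := by
    rw [← Multiset.coe_eq_coe, ← Multiset.map_coe, ← Multiset.map_coe, ← hIcoe]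
    exact hM
  have hsorted : ∀ t : ℕ → ℝ, (∀ i, 1 ≤ i → i < r → t i ≤ t (i+1)) →
      ((List.range' 1 r).map t).Pairwise (· ≤ ·) := by
    intro t hmt
    have mono : ∀ a b : ℕ, 1 ≤ a → a ≤ b → b ≤ r → t a ≤ t b := by
      intro a b ha hab hbr
      induction b, hab using Nat.le_induction with
      | base => exact le_refl _
      | succ b hb ih =>
        exact le_trans (ih (by omega)) (hmt b (by omega) (by omega))
    rw [List.pairwise_map]
    refine List.pairwise_iff_get.mpr fun i j hij => ?_
    have hlen : (List.range' 1 r).length = r := by simp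
    have hgi : (List.range' 1 r).get i = 1 + i.1 := by
      rw [List.get_eq_getElem, List.getElem_range']; omega
    have hgj : (List.range' 1 r).get j = 1 + j.1 := by
      rw [List.get_eq_getElem, List.getElem_range']; omega
    rw [hgi, hgj]
    have hj : j.1 < r := by simpa using j.2
    exact mono _ _ (by omega) (by omega) (by omega)
  have hlist : (List.range' 1 r).map s = (List.range' 1 r).map s' :=
    List.Perm.eq_of_pairwise' (hsorted s hmono) (hsorted s' hmono') hlistperm
  intro i h1 hir
  have hi' : i - 1 < ((List.range' 1 r).map s).length := by
    simpa [List.length_range'] using by omega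
  have hi'' : i - 1 < ((List.range' 1 r).map s').length := by
    simpa [List.length_range'] using by omega
  have e1 : ((List.range' 1 r).map s)[i-1]'hi' = s i := by
    rw [List.getElem_map, List.getElem_range']
    congr 1
    omega
  have e2 : ((List.range' 1 r).map s')[i-1]'hi'' = s' i := by
    rw [List.getElem_map, List.getElem_range']
    congr 1
    omega
  rw [← e1, ← e2]
  exact List.getElem_of_eq hlist hi'
end

section
/- Let K be complete for a p-adic absolute value (|p| < 1) and set ω := |p|^{1/(p−1)}. Then ω = lim_{n→∞} |n!|^{1/n}, and 0 < ω < 1. -/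
open Filter Real

section Aux

variable {K : Type} [Field K] (abv : AbsoluteValue K ℝ) (hna : IsNonarchimedean ⇑abv)

include hna

/-- nonarchimedean absolute values are at most 1 on naturals -/
lemma aux_nat_le_one (m : ℕ) : abv (m : K) ≤ 1 := by
  have h := IsNonarchimedean.nmul_le (f := abv) hna (n := m) (a := (1 : K))
  simpa using h

lemma aux_int_le_one (z : ℤ) : abv (z : K) ≤ 1 := by
  have key : ∀ m : ℕ, abv (((m : ℤ) : K)) ≤ 1 := by
    intro m
    rw [Int.cast_natCast]
    exact aux_nat_le_one abv hna m
  rcases Int.natAbs_eq z with h2 | h2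
  · rw [h2]; exact key _
  · rw [h2, Int.cast_neg, abv.map_neg]; exact key _

/-- naturals coprime to `p` have absolute value exactly 1 -/
lemma aux_coprime_eq_one {p : ℕ} (hp : p.Prime) (hlt : abv (p : K) < 1)
    {m : ℕ} (hm : ¬ p ∣ m) : abv (m : K) = 1 := by
  have hcop : Nat.Coprime p m := (Nat.Prime.coprime_iff_not_dvd hp).2 hm
  have hic : IsCoprime (p : ℤ) (m : ℤ) := Nat.isCoprime_iff_coprime.mpr hcop
  obtain ⟨a, b, hab⟩ := hic
  have hK : (a : K) * (p : K) + (b : K) * (m : K) = 1 := by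
    have := congrArg (fun z : ℤ => (z : K)) hab
    push_cast at this
    simpa using this
  have h1 : (1 : ℝ) = abv ((a : K) * (p : K) + (b : K) * (m : K)) := by
    rw [hK, abv.map_one]
  have hmax := hna ((a : K) * (p : K)) ((b : K) * (m : K))
  have hA : abv ((a : K) * (p : K)) ≤ abv (p : K) := by
    rw [abv.map_mul]
    calc abv ((a : K)) * abv ((p : K)) ≤ 1 * abv ((p : K)) := by
          apply mul_le_mul_of_nonneg_right (aux_int_le_one abv hna a) (abv.nonneg _)
      _ = abv ((p : K)) := one_mul _
  have hB : abv ((b : K) * (m : K)) ≤ abv (m : K) := by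
    rw [abv.map_mul]
    calc abv ((b : K)) * abv ((m : K)) ≤ 1 * abv ((m : K)) := by
          apply mul_le_mul_of_nonneg_right (aux_int_le_one abv hna b) (abv.nonneg _)
      _ = abv ((m : K)) := one_mul _
  have hge : (1 : ℝ) ≤ abv (m : K) := by
    by_contra hcon
    push_neg at hcon
    have : (1 : ℝ) ≤ max (abv ((a : K) * (p : K))) (abv ((b : K) * (m : K))) := by
      rw [h1]; exact hmax
    rcases max_cases (abv ((a : K) * (p : K))) (abv ((b : K) * (m : K))) with ⟨heq, _⟩ | ⟨heq, _⟩ <;>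
      rw [heq] at this
    · linarith
    · linarith
  exact le_antisymm (aux_nat_le_one abv hna m) hge

/-- `|n!| = |p| ^ (v_p(n!))` -/
lemma aux_abv_factorial {p : ℕ} (hp : p.Prime) (hlt : abv (p : K) < 1) (n : ℕ) :
    abv ((n.factorial : K)) = abv ((p : K)) ^ (padicValNat p n.factorial) := by
  have hfac : p ^ (n.factorial.factorization p) * ordCompl[p] n.factorial = n.factorial :=
    Nat.ordProj_mul_ordCompl_eq_self n.factorial p
  have hnd : ¬ p ∣ ordCompl[p] n.factorial :=
    Nat.not_dvd_ordCompl hp (Nat.factorial_ne_zero n)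
  have hK : ((n.factorial : ℕ) : K) = (p : K) ^ (n.factorial.factorization p) *
      ((ordCompl[p] n.factorial : ℕ) : K) := by
    conv_lhs => rw [← hfac]
    push_cast; ring
  rw [hK, abv.map_mul, abv.map_pow, aux_coprime_eq_one abv hna hp hlt hnd, mul_one]
  congr 1
  exact Nat.factorization_def n.factorial hp

end Aux

/-- the digit-sum over n tends to zero -/
lemma aux_digitsum_div_tendsto (p : ℕ) (hp : p.Prime) :
    Filter.Tendsto (fun n : ℕ => ((p.digits n).sum : ℝ) / n) Filter.atTop (nhds 0) := by
  have hp1 : 1 < p := hp.one_lt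
  have hlogp : 0 < Real.log p := Real.log_pos (by exact_mod_cast hp1)
  -- bound: digit sum ≤ (Nat.log p n + 1) * p
  have hbound : ∀ n : ℕ, 1 ≤ n → ((p.digits n).sum : ℝ) ≤ (Real.logb p n + 1) * p := by
    intro n hn
    have hlen : (p.digits n).length = Nat.log p n + 1 :=
      Nat.digits_len p n hp1 (by omega)
    have hsum : (p.digits n).sum ≤ (p.digits n).length * p := by
      simpa [smul_eq_mul] using
        List.sum_le_card_nsmul (p.digits n) p (fun x hx => le_of_lt (Nat.digits_lt_base hp1 hx))
    have h1 : ((p.digits n).sum : ℝ) ≤ ((Nat.log p n : ℝ) + 1) * p := by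
      have := hsum
      rw [hlen] at this
      exact_mod_cast this
    have h2 : (Nat.log p n : ℝ) ≤ Real.logb p n := Real.natLog_le_logb n p
    calc ((p.digits n).sum : ℝ) ≤ ((Nat.log p n : ℝ) + 1) * p := h1
      _ ≤ (Real.logb p n + 1) * p := by
          apply mul_le_mul_of_nonneg_right _ (by positivity)
          linarith
  -- the majorant tends to 0
  have hmaj : Filter.Tendsto (fun n : ℕ => (Real.logb p n + 1) * p / n)
      Filter.atTop (nhds 0) := by
    have hlog : Filter.Tendsto (fun x : ℝ => Real.log x / x) Filter.atTop (nhds 0) :=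
      Real.isLittleO_log_id_atTop.tendsto_div_nhds_zero
    have hlogn : Filter.Tendsto (fun n : ℕ => Real.log n / n) Filter.atTop (nhds 0) :=
      hlog.comp tendsto_natCast_atTop_atTop
    have hinv : Filter.Tendsto (fun n : ℕ => (1 : ℝ) / n) Filter.atTop (nhds 0) :=
      tendsto_one_div_atTop_nhds_zero_nat
    have key : Filter.Tendsto
        (fun n : ℕ => (Real.log n / n) * (p / Real.log p) + (p : ℝ) * (1 / n))
        Filter.atTop (nhds 0) := by
      have h1 := hlogn.mul_const ((p : ℝ) / Real.log p)
      have h2 := hinv.const_mul (p : ℝ)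
      have := h1.add h2
      simpa using this
    apply key.congr'
    filter_upwards [Filter.eventually_ge_atTop 1] with n hn
    have hn0 : (0 : ℝ) < n := by exact_mod_cast hn
    rw [Real.logb, div_eq_mul_inv]
    field_simp
  apply squeeze_zero'
  · filter_upwards [Filter.eventually_ge_atTop 1] with n hn
    positivity
  · filter_upwards [Filter.eventually_ge_atTop 1] with n hn
    have hn0 : (0 : ℝ) < n := by exact_mod_cast hn
    exact div_le_div_of_nonneg_right (hbound n hn) hn0.le
  · exact hmaj

/-- `v_p(n!)/n → 1/(p-1)` -/
lemma aux_padicVal_div_tendsto (p : ℕ) (hp : p.Prime) :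
    Filter.Tendsto (fun n : ℕ => (padicValNat p n.factorial : ℝ) / n)
      Filter.atTop (nhds (1 / ((p : ℝ) - 1))) := by
  haveI : Fact p.Prime := ⟨hp⟩
  have hp1 : 1 < p := hp.one_lt
  have hp1R : (1 : ℝ) < p := by exact_mod_cast hp1
  have hpm1 : (0 : ℝ) < (p : ℝ) - 1 := by linarith
  have hds := aux_digitsum_div_tendsto p hp
  have key : Filter.Tendsto
      (fun n : ℕ => (1 - ((p.digits n).sum : ℝ) / n) * (1 / ((p : ℝ) - 1)))
      Filter.atTop (nhds (1 / ((p : ℝ) - 1))) := by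
    have h1 : Filter.Tendsto (fun n : ℕ => 1 - ((p.digits n).sum : ℝ) / n)
        Filter.atTop (nhds 1) := by
      have := (tendsto_const_nhds (x := (1 : ℝ)) (f := Filter.atTop (α := ℕ))).sub hds
      simpa using this
    have := h1.mul_const (1 / ((p : ℝ) - 1))
    simpa using this
  apply key.congr'
  filter_upwards [Filter.eventually_ge_atTop 1] with n hn
  have hn0 : (0 : ℝ) < n := by exact_mod_cast hn
  -- Legendre's theorem
  have hleg : (p - 1) * padicValNat p n.factorial = n - (p.digits n).sum :=
    sub_one_mul_padicValNat_factorial n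
  have hsle : (p.digits n).sum ≤ n := Nat.digit_sum_le p n
  have hpm1ne : ((p : ℝ) - 1) ≠ 0 := ne_of_gt hpm1
  have h2 : (((p - 1) * padicValNat p n.factorial : ℕ) : ℝ)
      = ((n - (p.digits n).sum : ℕ) : ℝ) := congrArg (fun k : ℕ => (k : ℝ)) hleg
  rw [Nat.cast_mul, Nat.cast_sub hsle, Nat.cast_sub (le_of_lt hp1)] at h2
  have hlegR : ((p : ℝ) - 1) * (padicValNat p n.factorial : ℝ)
      = (n : ℝ) - ((p.digits n).sum : ℝ) := by
    rw [← h2]; push_cast; ring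
  have hV : (padicValNat p n.factorial : ℝ)
      = ((n : ℝ) - ((p.digits n).sum : ℝ)) / ((p : ℝ) - 1) := by
    rw [eq_div_iff hpm1ne]; linarith
  set S := ((p.digits n).sum : ℝ) with hS
  set V := (padicValNat p n.factorial : ℝ) with hVdef
  rw [hV]
  field_simp

/-- for a `p`-adic nonarchimedean absolute value (`0 < |p| < 1`),
`ω := |p|^{1/(p-1)}` satisfies `0 < ω < 1` and `ω = lim_n |n!|^{1/n}`. -/
theorem omega_eq_limit_factorial
    {K : Type} [Field K] (abv : AbsoluteValue K ℝ) (hna : IsNonarchimedean ⇑abv)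
    (p : ℕ) (hp : p.Prime) (hlt : abv (p : K) < 1) (hpos : 0 < abv (p : K)) :
    (0 < abv (p : K) ^ ((1 : ℝ) / ((p : ℝ) - 1)) ∧
      abv (p : K) ^ ((1 : ℝ) / ((p : ℝ) - 1)) < 1) ∧
    Filter.Tendsto (fun n : ℕ => abv ((n.factorial : K)) ^ ((1 : ℝ) / (n : ℝ)))
      Filter.atTop (nhds (abv (p : K) ^ ((1 : ℝ) / ((p : ℝ) - 1)))) := by
  have hp1R : (1 : ℝ) < p := by exact_mod_cast hp.one_lt
  have hexp : 0 < (1 : ℝ) / ((p : ℝ) - 1) := by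
    apply div_pos one_pos; linarith
  refine ⟨⟨Real.rpow_pos_of_pos hpos _, Real.rpow_lt_one hpos.le hlt hexp⟩, ?_⟩
  set c := abv ((p : K)) with hc
  -- the inner ratio tends to 1/(p-1)
  have hv := aux_padicVal_div_tendsto p hp
  -- continuity of c ^ ·
  have hcont : Filter.Tendsto (fun n : ℕ => c ^ ((padicValNat p n.factorial : ℝ) / n))
      Filter.atTop (nhds (c ^ ((1 : ℝ) / ((p : ℝ) - 1)))) :=
    (Real.continuousAt_const_rpow (ne_of_gt hpos)).tendsto.comp hv
  apply hcont.congr'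
  filter_upwards [Filter.eventually_ge_atTop 1] with n hn
  have hn0 : (n : ℝ) ≠ 0 := by positivity
  rw [aux_abv_factorial abv hna hp hlt n, ← Real.rpow_natCast c (padicValNat p n.factorial),
    ← Real.rpow_mul hpos.le]
  congr 1
  field_simp
end
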